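/- Let n ≥ 1, m ≥ 1, q ∈ ℝ, and set θ_m = 2π/(2m+1) and ζ = exp(2πi/(2m+1)) ∈ ℂ. Suppose x₁, …, x_{2n} ∈ ℂ are the roots (with multiplicity) of K_n(X,q) = (1+X)^{2n} + qX^n, i.e. (1+X)^{2n} + qX^n = ∏_{l=1}^{2n}(X - x_l) in ℂ[X]. Then (∏_{1 ≤ i < j ≤ 2n}(x_i - x_j)²) · (∏_{1 ≤ k < l ≤ 2m}(ζ^k - ζ^l)²) · (∏_{l=1}^{2n} ∏_{k=1}^{2m}(x_l - ζ^k)²) = (-1)^m (2m+1)^{2m-1} n^{2n} · q^{2n-1}(q + 2^{2n}) · (∏_{k=1}^{m}(q + (2cos(kθ_m)+2)^n))⁴. -/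
import Mathlib


open Finset Polynomial Complex

private lemma eval_deriv_prod' {ι : Type*} [DecidableEq ι] (s : Finset ι) (g : ι → ℂ)
    {i : ι} (hi : i ∈ s) :
    Polynomial.eval (g i) (Polynomial.derivative (∏ j ∈ s, (X - C (g j)))) =
      ∏ j ∈ s.erase i, (g i - g j) := by
  set t := s.erase i with ht
  have hs : s = insert i t := (Finset.insert_erase hi).symm
  have hit : i ∉ t := Finset.notMem_erase i s
  rw [hs, Finset.prod_insert hit, derivative_mul]
  simp [Polynomial.eval_prod]

private lemma prod_neg'' {ι : Type*} (s : Finset ι) (f : ι → ℂ) :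
    ∏ i ∈ s, -f i = (-1) ^ s.card * ∏ i ∈ s, f i := by
  rw [← Finset.prod_const, ← Finset.prod_mul_distrib]; simp

private lemma neg_one_pow_helper' (t : ℕ) (ht : 1 ≤ t) :
    (-1 : ℂ) ^ ((2 * t) * (2 * t - 1) / 2) = (-1) ^ t := by
  set k := 2 * t - 1 with hk
  have h1 : (2 * t) * k = t * k * 2 := by ring
  have h2 : (2 * t) * (2 * t - 1) / 2 = t * k := by
    rw [← hk, h1, Nat.mul_div_cancel _ two_pos]
  rw [h2, mul_comm, pow_mul]
  have hodd : Odd k := ⟨t - 1, by omega⟩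
  rw [hodd.neg_one_pow]

private lemma sq_pairs' {ι : Type*} [LinearOrder ι] [DecidableEq ι] (s : Finset ι) (g : ι → ℂ) :
    ∏ i ∈ s, ∏ j ∈ s.erase i, (g i - g j)
      = (-1) ^ (s.card * (s.card - 1) / 2) *
        (∏ i ∈ s, ∏ j ∈ s.filter (fun j => i < j), (g i - g j)) ^ 2 := by
  classical
  have hsplit : ∀ i ∈ s, s.erase i
      = s.filter (fun j => i < j) ∪ s.filter (fun j => j < i) := by
    intro i hi
    ext j
    simp only [Finset.mem_erase, Finset.mem_union, Finset.mem_filter]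
    constructor
    · rintro ⟨hne, hj⟩
      rcases lt_or_gt_of_ne (Ne.symm hne) with h | h
      · exact Or.inl ⟨hj, h⟩
      · exact Or.inr ⟨hj, h⟩
    · rintro (⟨hj, h⟩ | ⟨hj, h⟩)
      · exact ⟨ne_of_gt h, hj⟩
      · exact ⟨ne_of_lt h, hj⟩
  have hdisj : ∀ i : ι, Disjoint (s.filter (fun j => i < j)) (s.filter (fun j => j < i)) := by
    intro i
    rw [Finset.disjoint_left]
    intro a ha hb
    simp only [Finset.mem_filter] at ha hb
    exact absurd (ha.2.trans hb.2) (lt_irrefl i)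
  have hswap : ∀ x y : ι, (x ∈ s ∧ y ∈ s.filter (fun j => j < x))
      ↔ (x ∈ s.filter (fun j => y < j) ∧ y ∈ s) := by
    intro x y
    simp only [Finset.mem_filter]
    tauto
  have hcount : ∑ i ∈ s, (s.filter (fun j => i < j)).card = s.card * (s.card - 1) / 2 := by
    have e1 : ∑ i ∈ s, ((s.filter (fun j => i < j)).card + (s.filter (fun j => j < i)).card)
        = s.card * (s.card - 1) := by
      rw [Finset.sum_congr rfl (fun i hi => by
        rw [← Finset.card_union_of_disjoint (hdisj i), ← hsplit i hi,
          Finset.card_erase_of_mem hi])]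
      rw [Finset.sum_const, smul_eq_mul]
    have e2 : ∑ i ∈ s, (s.filter (fun j => j < i)).card
        = ∑ i ∈ s, (s.filter (fun j => i < j)).card := by
      have := Finset.sum_comm' hswap (f := fun _ _ => (1 : ℕ))
      simpa only [Finset.card_eq_sum_ones] using this
    rw [Finset.sum_add_distrib, e2] at e1
    exact (Nat.div_eq_of_eq_mul_left two_pos (by omega)).symm
  have key : ∏ i ∈ s, ∏ j ∈ s.erase i, (g i - g j)
      = (∏ i ∈ s, ∏ j ∈ s.filter (fun j => i < j), (g i - g j)) *
        (∏ i ∈ s, ∏ j ∈ s.filter (fun j => j < i), (g i - g j)) := by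
    rw [← Finset.prod_mul_distrib]
    exact Finset.prod_congr rfl fun i hi => by
      rw [hsplit i hi, Finset.prod_union (hdisj i)]
  have hB : (∏ i ∈ s, ∏ j ∈ s.filter (fun j => j < i), (g i - g j))
      = (-1) ^ (s.card * (s.card - 1) / 2) *
        ∏ i ∈ s, ∏ j ∈ s.filter (fun j => i < j), (g i - g j) := by
    rw [Finset.prod_comm' hswap]
    have : ∀ i ∈ s, ∏ j ∈ s.filter (fun j => i < j), (g j - g i)
        = (-1) ^ (s.filter (fun j => i < j)).card *
          ∏ j ∈ s.filter (fun j => i < j), (g i - g j) := by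
      intro i _
      rw [← Finset.prod_const, ← Finset.prod_mul_distrib]
      exact Finset.prod_congr rfl fun j _ => by ring
    rw [Finset.prod_congr rfl this, Finset.prod_mul_distrib,
      Finset.prod_pow_eq_pow_sum, hcount]
  rw [key, hB]
  ring

/-- Discriminant of the product `K_n(x,q) f_m(x)`:
`Δ_x(K_n f_m) = (-1)^m (2m+1)^(2m-1) n^(2n) q^(2n-1) (q + 2^(2n)) H_m^{(n)}(q)^4`. -/
theorem discriminant_Kn_fm (n m : ℕ) (hn : 1 ≤ n) (hm : 1 ≤ m) (q : ℝ)
    (θ : ℝ) (hθ : θ = 2 * Real.pi / (2 * m + 1))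
    (ζ : ℂ) (hζ : ζ = Complex.exp (2 * Real.pi * Complex.I / (2 * m + 1)))
    (x : Fin (2 * n) → ℂ)
    (hroots : (1 + (X : ℂ[X])) ^ (2 * n) + C (q : ℂ) * X ^ n = ∏ l, (X - C (x l))) :
    (∏ i, ∏ j ∈ Finset.univ.filter (fun j => i < j), (x i - x j) ^ 2) *
      (∏ k ∈ Finset.Icc 1 (2 * m), ∏ l ∈ Finset.Icc (k + 1) (2 * m), (ζ ^ k - ζ ^ l) ^ 2) *
      (∏ l, ∏ k ∈ Finset.Icc 1 (2 * m), (x l - ζ ^ k) ^ 2) =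
    (-1) ^ m * (2 * (m : ℂ) + 1) ^ (2 * m - 1) * (n : ℂ) ^ (2 * n) *
      ((q : ℂ) ^ (2 * n - 1) * ((q : ℂ) + 2 ^ (2 * n))) *
      (∏ k ∈ Finset.Icc 1 m, ((q : ℂ) + ((2 * Real.cos (k * θ) + 2 : ℝ) : ℂ) ^ n)) ^ 4 := by
  have heval : ∀ a : ℂ, (1 + a) ^ (2 * n) + (q : ℂ) * a ^ n = ∏ l, (a - x l) := by
    intro a
    have := congrArg (Polynomial.eval a) hroots
    simpa [Polynomial.eval_prod] using this
  have hcard : (Finset.univ : Finset (Fin (2 * n))).card = 2 * n := by simp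
  have hcard2 : (Finset.Icc 1 (2 * m)).card = 2 * m := by
    rw [Nat.card_Icc]; omega
  have hrooteq : ∀ l, (1 + x l) ^ (2 * n) = -((q : ℂ) * (x l) ^ n) := by
    intro l
    have h3 := heval (x l)
    rw [Finset.prod_eq_zero (Finset.mem_univ l) (sub_self (x l))] at h3
    linear_combination h3
  -- the q = 0 case
  by_cases hq : (q : ℂ) = 0
  · have hx1 : ∀ l, x l = -1 := by
      intro l
      have := hrooteq l
      rw [hq, zero_mul, neg_zero, pow_eq_zero_iff (by omega : 2 * n ≠ 0)] at this
      linear_combination this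
    have hLHS0 : (∏ i, ∏ j ∈ Finset.univ.filter (fun j => i < j), (x i - x j) ^ 2) = 0 := by
      have h01 : (⟨0, by omega⟩ : Fin (2 * n)) < ⟨1, by omega⟩ := by
        simp [Fin.lt_def]
      apply Finset.prod_eq_zero (Finset.mem_univ (⟨0, by omega⟩ : Fin (2 * n)))
      apply Finset.prod_eq_zero (i := (⟨1, by omega⟩ : Fin (2 * n)))
      · simp [Finset.mem_filter, h01]
      · rw [hx1, hx1]; ring
    rw [hLHS0, hq]
    rw [zero_pow (by omega : 2 * n - 1 ≠ 0)]
    ring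
  -- main case q ≠ 0
  -- ### Part 1 : the discriminant of K_n
  have hxprod : ∏ l, x l = 1 := by
    have h0 := heval 0
    rw [zero_pow (by omega : n ≠ 0), mul_zero, add_zero, add_zero, one_pow] at h0
    have h0' : ∀ l : Fin (2 * n), (0 : ℂ) - x l = -(x l) := fun l => by ring
    rw [Finset.prod_congr rfl (fun l _ => h0' l), prod_neg'', hcard,
      (show Even (2*n) from ⟨n, by omega⟩).neg_one_pow, one_mul] at h0
    exact h0.symm
  have h1p : ∏ l, (1 + x l) = (q : ℂ) * (-1) ^ n := by
    have h1 := heval (-1)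
    rw [show (1 + (-1 : ℂ)) = 0 by ring, zero_pow (by omega : 2 * n ≠ 0), zero_add] at h1
    have h1' : ∀ l : Fin (2 * n), (-1 : ℂ) - x l = -(1 + x l) := fun l => by ring
    rw [Finset.prod_congr rfl (fun l _ => h1' l), prod_neg'', hcard,
      (show Even (2*n) from ⟨n, by omega⟩).neg_one_pow, one_mul] at h1
    exact h1.symm
  have h1m : ∏ l, (1 - x l) = 2 ^ (2 * n) + (q : ℂ) := by
    have h2 := heval 1
    rw [one_pow, mul_one, show (1 : ℂ) + 1 = 2 by norm_num] at h2
    exact h2.symm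
  have hEval2 : ∀ a : ℂ, Polynomial.eval a (Polynomial.derivative (∏ l, (X - C (x l)))) =
      2 * n * (1 + a) ^ (2 * n - 1) + (q : ℂ) * n * a ^ (n - 1) := by
    intro a
    rw [← hroots]
    simp [Polynomial.derivative_pow]
    ring
  have hkey : ∀ l, (2 * (n : ℂ) * (1 + x l) ^ (2 * n - 1) + (q : ℂ) * n * (x l) ^ (n - 1)) *
      (x l * (1 + x l)) = (q : ℂ) * n * (x l) ^ n * (1 - x l) := by
    intro l
    have hB : (1 + x l) ^ (2 * n - 1) * (1 + x l) = -((q : ℂ) * ((x l) ^ (n - 1) * x l)) := by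
      rw [← pow_succ, ← pow_succ, show 2 * n - 1 + 1 = 2 * n by omega,
        show n - 1 + 1 = n by omega]
      exact hrooteq l
    have epow : (x l) ^ n = (x l) ^ (n - 1) * x l := by
      rw [← pow_succ]; congr 1; omega
    linear_combination (2 * (n : ℂ) * x l) * hB - ((q : ℂ) * (n : ℂ) * (1 - x l)) * epow
  have hprodkey : (∏ l, Polynomial.eval (x l) (Polynomial.derivative (∏ j, (X - C (x j))))) *
      ((∏ l, x l) * (∏ l, (1 + x l)))
      = ((q : ℂ) * n) ^ (2 * n) * (∏ l, x l) ^ n * (∏ l, (1 - x l)) := by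
    have h : ∏ l, (Polynomial.eval (x l) (Polynomial.derivative (∏ j, (X - C (x j)))) *
        (x l * (1 + x l))) = ∏ l, ((q : ℂ) * n * (x l) ^ n * (1 - x l)) :=
      Finset.prod_congr rfl (fun l _ => by rw [hEval2 (x l)]; exact hkey l)
    rw [Finset.prod_mul_distrib, Finset.prod_mul_distrib, Finset.prod_mul_distrib,
      Finset.prod_mul_distrib, Finset.prod_const, Finset.prod_pow, hcard] at h
    linear_combination h
  have hsqn : ((-1 : ℂ)) ^ n * (-1) ^ n = 1 := by
    rw [← pow_add, show n + n = 2 * n by ring, pow_mul]; norm_num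
  have hq2n : (q : ℂ) ^ (2 * n) = (q : ℂ) ^ (2 * n - 1) * q := by
    rw [← pow_succ]; congr 1; omega
  have hEprod : (∏ l, Polynomial.eval (x l) (Polynomial.derivative (∏ j, (X - C (x j)))))
      = (-1) ^ n * (n : ℂ) ^ (2 * n) * (q : ℂ) ^ (2 * n - 1) * (2 ^ (2 * n) + q) := by
    apply mul_right_cancel₀ (mul_ne_zero hq (pow_ne_zero n (neg_ne_zero.mpr one_ne_zero)))
    rw [hxprod, h1p, h1m] at hprodkey
    rw [mul_pow] at hprodkey
    linear_combination hprodkey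
      - ((n : ℂ) ^ (2 * n) * (q : ℂ) ^ (2 * n - 1) * q * (2 ^ (2 * n) + (q : ℂ))) * hsqn
      + ((n : ℂ) ^ (2 * n) * (2 ^ (2 * n) + (q : ℂ))) * hq2n
  have hsign := sq_pairs' (Finset.univ : Finset (Fin (2 * n))) x
  rw [hcard, neg_one_pow_helper' n hn] at hsign
  have hE1 : ∏ l, ∏ j ∈ Finset.univ.erase l, (x l - x j)
      = ∏ l, Polynomial.eval (x l) (Polynomial.derivative (∏ j, (X - C (x j)))) :=
    Finset.prod_congr rfl fun l _ => (eval_deriv_prod' Finset.univ x (Finset.mem_univ l)).symm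
  have hA2 : (∏ i, ∏ j ∈ Finset.univ.filter (fun j => i < j), (x i - x j) ^ 2)
      = (∏ i, ∏ j ∈ Finset.univ.filter (fun j => i < j), (x i - x j)) ^ 2 := by
    rw [← Finset.prod_pow]
    exact Finset.prod_congr rfl fun i _ => (Finset.prod_pow _ _ _)
  have hD : (∏ i, ∏ j ∈ Finset.univ.filter (fun j => i < j), (x i - x j) ^ 2)
      = (n : ℂ) ^ (2 * n) * (q : ℂ) ^ (2 * n - 1) * (2 ^ (2 * n) + q) := by
    rw [hE1] at hsign
    rw [hEprod] at hsign
    rw [hA2]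
    linear_combination (-1 : ℂ) ^ n * hsign.symm +
      ((n : ℂ) ^ (2 * n) * (q : ℂ) ^ (2 * n - 1) * (2 ^ (2 * n) + (q : ℂ))
        - (∏ i, ∏ j ∈ Finset.univ.filter (fun j => i < j), (x i - x j)) ^ 2) * hsqn
  -- ### Part 2 : the discriminant of f_m
  have hNz : ((2 * m + 1 : ℕ) : ℂ) ≠ 0 := Nat.cast_ne_zero.mpr (by omega)
  have hprim : IsPrimitiveRoot ζ (2 * m + 1) := by
    rw [hζ, show (2 * (m : ℂ) + 1) = ((2 * m + 1 : ℕ) : ℂ) by push_cast; ring]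
    exact Complex.isPrimitiveRoot_exp (2 * m + 1) (by omega)
  have hzeta1 : ζ ^ (2 * m + 1) = 1 := hprim.pow_eq_one
  have hXpow : (X : ℂ[X]) ^ (2 * m + 1) - C 1
      = ∏ i ∈ Finset.range (2 * m + 1), (X - C (ζ ^ i)) := by
    have h := X_pow_sub_C_eq_prod hprim (by omega : 0 < 2 * m + 1) (one_pow (2 * m + 1))
    simpa using h
  have hrange : Finset.range (2 * m + 1) = insert 0 (Finset.Icc 1 (2 * m)) := by
    ext a; simp only [Finset.mem_range, Finset.mem_insert, Finset.mem_Icc]; omega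
  have hXf : (X : ℂ[X]) ^ (2 * m + 1) - C 1
      = (X - C 1) * ∏ k ∈ Finset.Icc 1 (2 * m), (X - C (ζ ^ k)) := by
    rw [hXpow, hrange, Finset.prod_insert (by simp)]
    norm_num
  have hdeval : ∀ a : ℂ, ((2 * m + 1 : ℕ) : ℂ) * a ^ (2 * m)
      = (∏ k ∈ Finset.Icc 1 (2 * m), (a - ζ ^ k))
        + (a - 1) * Polynomial.eval a (Polynomial.derivative
            (∏ k ∈ Finset.Icc 1 (2 * m), (X - C (ζ ^ k)))) := by
    intro a
    have h := congrArg Polynomial.derivative hXf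
    rw [Polynomial.derivative_sub, Polynomial.derivative_C, sub_zero, Polynomial.derivative_X_pow,
      Polynomial.derivative_mul, Polynomial.derivative_sub, Polynomial.derivative_X,
      Polynomial.derivative_C, sub_zero, one_mul, show 2 * m + 1 - 1 = 2 * m by omega] at h
    have h2 := congrArg (Polynomial.eval a) h
    simp only [Polynomial.eval_mul, Polynomial.eval_add, Polynomial.eval_sub, Polynomial.eval_C,
      Polynomial.eval_pow, Polynomial.eval_X, Polynomial.eval_prod, Polynomial.eval_one] at h2
    exact h2
  have hfz : ∀ k ∈ Finset.Icc 1 (2 * m), ∏ l ∈ Finset.Icc 1 (2 * m), (ζ ^ k - ζ ^ l) = 0 :=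
    fun k hk => Finset.prod_eq_zero hk (sub_self _)
  have hf1 : ∏ k ∈ Finset.Icc 1 (2 * m), ((1 : ℂ) - ζ ^ k) = ((2 * m + 1 : ℕ) : ℂ) := by
    have h := hdeval 1
    rw [one_pow, mul_one, sub_self, zero_mul, add_zero] at h
    exact h.symm
  have hFk : ∀ k ∈ Finset.Icc 1 (2 * m), (ζ ^ k - 1) * Polynomial.eval (ζ ^ k)
      (Polynomial.derivative (∏ l ∈ Finset.Icc 1 (2 * m), (X - C (ζ ^ l))))
      = ((2 * m + 1 : ℕ) : ℂ) * (ζ ^ k) ^ (2 * m) := by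
    intro k hk
    have h := hdeval (ζ ^ k)
    rw [hfz k hk, zero_add] at h
    exact h.symm
  have hsum : ∑ k ∈ Finset.Icc 1 (2 * m), k = m * (2 * m + 1) := by
    have h1 := Finset.sum_range_id_mul_two (2 * m + 1)
    have h2 : ∑ i ∈ Finset.range (2 * m + 1), i = ∑ k ∈ Finset.Icc 1 (2 * m), k := by
      rw [hrange, Finset.sum_insert (by simp), zero_add]
    have h3 : (∑ k ∈ Finset.Icc 1 (2 * m), k) * 2 = (m * (2 * m + 1)) * 2 := by
      rw [← h2, h1, show 2 * m + 1 - 1 = 2 * m by omega]; ring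
    exact Nat.eq_of_mul_eq_mul_right zero_lt_two h3
  have hgeo : ∏ k ∈ Finset.Icc 1 (2 * m), (ζ ^ k) ^ (2 * m) = 1 := by
    have h1 : ∀ k ∈ Finset.Icc 1 (2 * m), (ζ ^ k) ^ (2 * m) = ζ ^ (k * (2 * m)) :=
      fun k _ => by rw [← pow_mul]
    rw [Finset.prod_congr rfl h1, Finset.prod_pow_eq_pow_sum, ← Finset.sum_mul, hsum,
      show m * (2 * m + 1) * (2 * m) = (2 * m + 1) * (m * (2 * m)) by ring, pow_mul, hzeta1,
      one_pow]
  have hzprod : ∏ k ∈ Finset.Icc 1 (2 * m), (ζ ^ k - 1) = ((2 * m + 1 : ℕ) : ℂ) := by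
    have h1 : ∀ k ∈ Finset.Icc 1 (2 * m), ζ ^ k - 1 = -((1 : ℂ) - ζ ^ k) := fun k _ => by ring
    rw [Finset.prod_congr rfl h1, prod_neg'', hcard2,
      (show Even (2 * m) from ⟨m, by omega⟩).neg_one_pow, one_mul, hf1]
  have hNpow : ((2 * m + 1 : ℕ) : ℂ) ^ (2 * m)
      = ((2 * m + 1 : ℕ) : ℂ) ^ (2 * m - 1) * ((2 * m + 1 : ℕ) : ℂ) := by
    rw [← pow_succ]; congr 1; omega
  have hderprod : ∏ k ∈ Finset.Icc 1 (2 * m), Polynomial.eval (ζ ^ k)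
      (Polynomial.derivative (∏ l ∈ Finset.Icc 1 (2 * m), (X - C (ζ ^ l))))
      = ((2 * m + 1 : ℕ) : ℂ) ^ (2 * m - 1) := by
    have h := Finset.prod_congr rfl hFk
    rw [Finset.prod_mul_distrib, Finset.prod_mul_distrib, Finset.prod_const, hcard2, hzprod, hgeo,
      mul_one] at h
    apply mul_left_cancel₀ hNz
    rw [h, hNpow]; ring
  have hsqm : ((-1 : ℂ)) ^ m * (-1) ^ m = 1 := by
    rw [← pow_add, show m + m = 2 * m by ring, pow_mul]; norm_num
  have hsignf := sq_pairs' (Finset.Icc 1 (2 * m)) (fun i => ζ ^ i)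
  rw [hcard2, neg_one_pow_helper' m hm] at hsignf
  have hE1f : ∏ k ∈ Finset.Icc 1 (2 * m), ∏ l ∈ (Finset.Icc 1 (2 * m)).erase k, (ζ ^ k - ζ ^ l)
      = ∏ k ∈ Finset.Icc 1 (2 * m), Polynomial.eval (ζ ^ k)
        (Polynomial.derivative (∏ l ∈ Finset.Icc 1 (2 * m), (X - C (ζ ^ l)))) :=
    Finset.prod_congr rfl fun k hk => (eval_deriv_prod' _ (fun i => ζ ^ i) hk).symm
  have hIccfilt : ∀ k : ℕ, Finset.Icc (k + 1) (2 * m)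
      = (Finset.Icc 1 (2 * m)).filter (fun j => k < j) := by
    intro k; ext a
    simp only [Finset.mem_Icc, Finset.mem_filter]
    omega
  have hDf : (∏ k ∈ Finset.Icc 1 (2 * m), ∏ l ∈ Finset.Icc (k + 1) (2 * m), (ζ ^ k - ζ ^ l) ^ 2)
      = (-1) ^ m * ((2 * m + 1 : ℕ) : ℂ) ^ (2 * m - 1) := by
    have hA2f : (∏ k ∈ Finset.Icc 1 (2 * m), ∏ l ∈ Finset.Icc (k + 1) (2 * m), (ζ ^ k - ζ ^ l) ^ 2)
        = (∏ k ∈ Finset.Icc 1 (2 * m),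
            ∏ l ∈ (Finset.Icc 1 (2 * m)).filter (fun j => k < j), (ζ ^ k - ζ ^ l)) ^ 2 := by
      rw [← Finset.prod_pow]
      exact Finset.prod_congr rfl fun k _ => by rw [hIccfilt k, Finset.prod_pow]
    rw [hE1f, hderprod] at hsignf
    rw [hA2f]
    linear_combination (-(-1 : ℂ) ^ m) * hsignf
      - ((∏ k ∈ Finset.Icc 1 (2 * m),
          ∏ l ∈ (Finset.Icc 1 (2 * m)).filter (fun j => k < j), (ζ ^ k - ζ ^ l)) ^ 2) * hsqm
  -- ### Part 3 : the resultant
  have hzk : ∀ k : ℕ, ζ ^ k = Complex.exp (((k * θ : ℝ)) * Complex.I) := by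
    intro k
    rw [hζ, ← Complex.exp_nat_mul]
    congr 1
    rw [hθ]
    push_cast
    ring
  have hc : ∀ k : ℕ, (1 + ζ ^ k) ^ 2 = ζ ^ k * ((2 * Real.cos (k * θ) + 2 : ℝ) : ℂ) := by
    intro k
    rw [hzk k, Complex.exp_mul_I]
    push_cast
    linear_combination (Complex.sin ((k : ℂ) * (θ : ℂ))) ^ 2 * Complex.I_sq
      - Complex.sin_sq_add_cos_sq ((k : ℂ) * (θ : ℂ))
  have hKz : ∀ k : ℕ, ∏ l, (ζ ^ k - x l)
      = ζ ^ (k * n) * (((2 * Real.cos (k * θ) + 2 : ℝ) : ℂ) ^ n + (q : ℂ)) := by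
    intro k
    rw [← heval (ζ ^ k)]
    have h1 : (1 + ζ ^ k) ^ (2 * n)
        = ζ ^ (k * n) * (((2 * Real.cos (k * θ) + 2 : ℝ) : ℂ)) ^ n := by
      rw [pow_mul, hc k, mul_pow, ← pow_mul]
    rw [h1, ← pow_mul]
    ring
  have hinner : ∏ k ∈ Finset.Icc 1 (2 * m), ∏ l, (x l - ζ ^ k)
      = ∏ k ∈ Finset.Icc 1 (2 * m), (((2 * Real.cos (k * θ) + 2 : ℝ) : ℂ) ^ n + (q : ℂ)) := by
    have h1 : ∀ k ∈ Finset.Icc 1 (2 * m), ∏ l, (x l - ζ ^ k)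
        = ζ ^ (k * n) * (((2 * Real.cos (k * θ) + 2 : ℝ) : ℂ) ^ n + (q : ℂ)) := by
      intro k _
      have h2 : ∀ l : Fin (2 * n), x l - ζ ^ k = -(ζ ^ k - x l) := fun l => by ring
      rw [Finset.prod_congr rfl (fun l _ => h2 l), prod_neg'', hcard,
        (show Even (2 * n) from ⟨n, by omega⟩).neg_one_pow, one_mul, hKz k]
    rw [Finset.prod_congr rfl h1, Finset.prod_mul_distrib, Finset.prod_pow_eq_pow_sum,
      ← Finset.sum_mul, hsum, show m * (2 * m + 1) * n = (2 * m + 1) * (m * n) by ring,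
      pow_mul, hzeta1, one_pow, one_mul]
  have hT : (∏ l, ∏ k ∈ Finset.Icc 1 (2 * m), (x l - ζ ^ k) ^ 2)
      = (∏ k ∈ Finset.Icc 1 (2 * m), (((2 * Real.cos (k * θ) + 2 : ℝ) : ℂ) ^ n + (q : ℂ))) ^ 2 := by
    rw [← hinner]
    have h1 : (∏ l, ∏ k ∈ Finset.Icc 1 (2 * m), (x l - ζ ^ k) ^ 2)
        = (∏ l, ∏ k ∈ Finset.Icc 1 (2 * m), (x l - ζ ^ k)) ^ 2 := by
      rw [← Finset.prod_pow]
      exact Finset.prod_congr rfl fun l _ => Finset.prod_pow _ _ _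
    rw [h1, Finset.prod_comm]
  have hfold : ∏ k ∈ Finset.Icc 1 (2 * m), (((2 * Real.cos (k * θ) + 2 : ℝ) : ℂ) ^ n + (q : ℂ))
      = (∏ k ∈ Finset.Icc 1 m, ((q : ℂ) + ((2 * Real.cos (k * θ) + 2 : ℝ) : ℂ) ^ n)) ^ 2 := by
    have hsplit2 : Finset.Icc 1 (2 * m) = Finset.Icc 1 m ∪ Finset.Icc (m + 1) (2 * m) := by
      ext a; simp only [Finset.mem_Icc, Finset.mem_union]; omega
    have hdisj2 : Disjoint (Finset.Icc 1 m) (Finset.Icc (m + 1) (2 * m)) := by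
      rw [Finset.disjoint_left]; intro a ha hb
      simp only [Finset.mem_Icc] at ha hb; omega
    have hmirror : ∏ k ∈ Finset.Icc (m + 1) (2 * m),
          (((2 * Real.cos (k * θ) + 2 : ℝ) : ℂ) ^ n + (q : ℂ))
        = ∏ k ∈ Finset.Icc 1 m, (((2 * Real.cos (k * θ) + 2 : ℝ) : ℂ) ^ n + (q : ℂ)) := by
      apply Finset.prod_nbij' (fun k => 2 * m + 1 - k) (fun k => 2 * m + 1 - k)
      · intro a ha; simp only [Finset.mem_Icc] at *; omega
      · intro a ha; simp only [Finset.mem_Icc] at *; omega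
      · intro a ha; simp only [Finset.mem_Icc] at ha; omega
      · intro a ha; simp only [Finset.mem_Icc] at ha; omega
      · intro a ha
        simp only [Finset.mem_Icc] at ha
        have hcos : Real.cos (((2 * m + 1 - a : ℕ) : ℝ) * θ) = Real.cos ((a : ℝ) * θ) := by
          have hc1 : ((2 * m + 1 - a : ℕ) : ℝ) = 2 * (m : ℝ) + 1 - (a : ℝ) := by
            push_cast [Nat.cast_sub (by omega : a ≤ 2 * m + 1)]; ring
          have hθ2 : (2 * (m : ℝ) + 1) * θ = 2 * Real.pi := by
            rw [hθ]
            have : (2 * (m : ℝ) + 1) ≠ 0 := by positivity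
            field_simp
          rw [hc1, show (2 * (m : ℝ) + 1 - (a : ℝ)) * θ = (2 * (m : ℝ) + 1) * θ - (a : ℝ) * θ
            by ring, hθ2, Real.cos_two_pi_sub]
        rw [hcos]
    rw [hsplit2, Finset.prod_union hdisj2, hmirror, sq]
    have hcomm : ∏ k ∈ Finset.Icc 1 m, (((2 * Real.cos (k * θ) + 2 : ℝ) : ℂ) ^ n + (q : ℂ))
        = ∏ k ∈ Finset.Icc 1 m, ((q : ℂ) + ((2 * Real.cos (k * θ) + 2 : ℝ) : ℂ) ^ n) :=
      Finset.prod_congr rfl fun _ _ => add_comm _ _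
    rw [hcomm]
  -- ### Conclusion
  rw [hD, hDf, hT, hfold]
  push_cast
  ring
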